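/- arXiv:math/0002168 — 4 statements merged into one kernel-verified Lean document; each statement's English description precedes it below -/
import Mathlib

section
/- Let Γ be a finite-index subgroup of PSL(2,ℤ) that contains no element of order 2, and let Γ' = π⁻¹(Γ) be its preimage in SL(2,ℤ). Then the surjection Γ' → Γ induced by π splits: there exists a group homomorphism s : Γ → Γ' such that π(s(γ)) = γ for all γ ∈ Γ. -/
/-- `SL(2,ℤ)`: 2×2 integer matrices of determinant 1. -/
abbrev SL2Z : Type := Matrix.SpecialLinearGroup (Fin 2) ℤ

/-- `PSL(2,ℤ) = SL(2,ℤ)/{±I}`, realized as the quotient by the center. -/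
abbrev PSL2Z : Type := SL2Z ⧸ Subgroup.center SL2Z

/-- The quotient homomorphism `π : SL(2,ℤ) → PSL(2,ℤ)`. -/
def proj : SL2Z →* PSL2Z := QuotientGroup.mk' (Subgroup.center SL2Z)

/-
PSL(2,ℤ) is the free product of the cyclic groups generated by the images `s` of `S` and `u` of
`ST`, of orders 2 and 3: they generate because `S` and `T` generate SL(2,ℤ), and no reduced word
in them is trivial by ping-pong on the upper half-plane, with `s` moving the half-plane `re < 0`
into `re > 0` and `u`, `u²` moving `re > 0` into `re < 0`.

If PSL(2,ℤ) acts on the set SL(2,ℤ) so that each `g` lifts left multiplication by `g` and commutes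
with right multiplication by `Γ' = π⁻¹(Γ)`, then `γ ↦ γ • 1` is a splitting over `Γ`. By the free
product structure, such an action is given by lifts of `u` and `s` of orders 3 and 2.
For `u`, take left multiplication by `-ST`, which has order 3 in SL(2,ℤ). For `s`, left
multiplication by `S` has order 4, so twist it: `x ↦ ±Sx`, the sign read off a parity function on
the cosets `PSL(2,ℤ)/Γ` that `s` flips. Such a function exists because `s` acts on the cosets
without fixed points, which is where the absence of elements of order 2 in `Γ` is used.
-/

section CyclicFactors

variable {G K : Type*} [Group G] [Group K]

def zmodPowHom (n : ℕ) [NeZero n] (g : G) (hg : g ^ n = 1) : Multiplicative (ZMod n) →* G where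
  toFun a := g ^ a.toAdd.val
  map_one' := by simp
  map_mul' a b := by
    rw [toAdd_mul, ZMod.val_add, ← pow_add]
    exact (pow_eq_pow_mod _ hg).symm

lemma zmodPowHom_apply (n : ℕ) [NeZero n] (g : G) (hg : g ^ n = 1)
    (a : Multiplicative (ZMod n)) : zmodPowHom n g hg a = g ^ a.toAdd.val :=
  rfl

variable {ι : Type*} (n : ι → ℕ)

abbrev CyclicCoprod : Type _ := Monoid.CoprodI fun i => Multiplicative (ZMod (n i))

variable [∀ i, NeZero (n i)]

def CyclicCoprod.lift (g : ι → G) (hg : ∀ i, g i ^ n i = 1) : CyclicCoprod n →* G :=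
  Monoid.CoprodI.lift fun i => zmodPowHom (n i) (g i) (hg i)

lemma CyclicCoprod.lift_of (g : ι → G) (hg : ∀ i, g i ^ n i = 1) {i : ι}
    (a : Multiplicative (ZMod (n i))) :
    lift n g hg (Monoid.CoprodI.of a) = g i ^ a.toAdd.val :=
  Monoid.CoprodI.lift_of _ _

lemma CyclicCoprod.comp_lift (f : G →* K) (g : ι → G) (hg : ∀ i, g i ^ n i = 1) :
    f.comp (lift n g hg) = lift n (f ∘ g) fun i => by simp [← map_pow, hg i] :=
  Monoid.CoprodI.ext_hom _ _ fun i => by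
    ext a
    simp [CyclicCoprod.lift_of]

end CyclicFactors

theorem Function.Involutive.exists_parity {α : Type*} {f : α → α} (hf : Function.Involutive f)
    (hfree : ∀ x, f x ≠ x) : ∃ c : α → ZMod 2, ∀ x, c (f x) = c x + 1 := by
  classical
  let _ : LinearOrder α := linearOrderOfSTO WellOrderingRel
  refine ⟨fun x => if x < f x then 0 else 1, fun x => ?_⟩
  rcases (hfree x).lt_or_gt with h | h
  · simp [h, h.not_gt, hf x]
    decide
  · simp [h, h.not_gt, hf x]

section LiftingPerms

variable {E G : Type*} [Group E] [Group G] (π : E →* G) (Γ : Subgroup G)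

def liftingPerms : Subgroup (Equiv.Perm E × G) where
  carrier := {p | (∀ x, π (p.1 x) = p.2 * π x) ∧ ∀ x, ∀ b ∈ Γ.comap π, p.1 (x * b) = p.1 x * b}
  one_mem' := by simp
  mul_mem' := by
    rintro ⟨f, g⟩ ⟨f', g'⟩ ⟨hcover, hcomm⟩ ⟨hcover', hcomm'⟩
    refine ⟨fun x => ?_, fun x b hb => ?_⟩
    · simp [hcover, hcover', mul_assoc]
    · simp [hcomm' x b hb, hcomm _ b hb]
  inv_mem' := by
    rintro ⟨f, g⟩ ⟨hcover, hcomm⟩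
    refine ⟨fun x => ?_, fun x b hb => ?_⟩
    · simpa [eq_inv_mul_iff_mul_eq] using (hcover (f⁻¹ x)).symm
    · rw [Prod.fst_inv, Equiv.Perm.inv_eq_iff_eq, hcomm _ b hb]
      simp

theorem exists_splitting_of_liftingPerms (κ : G →* liftingPerms π Γ)
    (hκ : ∀ g, (κ g : Equiv.Perm E × G).2 = g) :
    ∃ s : Γ →* Γ.comap π, ∀ γ : Γ, π (s γ) = γ := by
  have hcover (g : G) (x : E) : π ((κ g : Equiv.Perm E × G).1 x) = g * π x := by
    rw [(κ g).2.1 x, hκ]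
  let s (γ : Γ) : Γ.comap π := ⟨(κ γ : Equiv.Perm E × G).1 1, by simp [hcover]⟩
  refine ⟨MonoidHom.mk' s fun γ δ => Subtype.ext ?_, fun γ => by simp [s, hcover]⟩
  simpa [s] using (κ γ).2.2 1 _ (s δ).2

end LiftingPerms

open scoped UpperHalfPlane

namespace ModularGroup

lemma S_mul_S : (S * S : SL2Z) = -1 := by decide

lemma S_mul_T_pow_three : (S * T : SL2Z) ^ 3 = -1 := by decide

lemma neg_S_mul_T_pow_three : (-(S * T) : SL2Z) ^ 3 = 1 := by decide

lemma S_mul_T_sq : (S * T : SL2Z) ^ 2 = T⁻¹ * S := by decide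

lemma re_S_smul (z : ℍ) : (S • z).re = -z.re / Complex.normSq z := by
  rw [UpperHalfPlane.modular_S_smul, UpperHalfPlane.mk_re, Complex.inv_re, Complex.normSq_neg,
    Complex.neg_re, UpperHalfPlane.coe_re]

lemma re_S_smul_pos {z : ℍ} (hz : z.re < 0) : 0 < (S • z).re := by
  rw [re_S_smul]
  exact div_pos (neg_pos.mpr hz) z.normSq_pos

lemma re_S_mul_T_smul_neg {z : ℍ} (hz : 0 < z.re) : ((S * T) • z).re < 0 := by
  rw [mul_smul, UpperHalfPlane.modular_T_smul, re_S_smul, UpperHalfPlane.vadd_re]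
  exact div_neg_of_neg_of_pos (by linarith) (UpperHalfPlane.normSq_pos _)

lemma re_S_mul_T_sq_smul_neg {z : ℍ} (hz : 0 < z.re) : ((S * T) ^ 2 • z).re < 0 := by
  rw [S_mul_T_sq, mul_smul, ← zpow_neg_one, UpperHalfPlane.modular_T_zpow_smul,
    UpperHalfPlane.vadd_re, re_S_smul, neg_div]
  have : 0 < z.re / Complex.normSq z := div_pos hz z.normSq_pos
  push_cast
  linarith

end ModularGroup

open ModularGroup

lemma eq_one_or_eq_neg_one_of_mem_center {A : SL2Z} (hA : A ∈ Subgroup.center SL2Z) :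
    A = 1 ∨ A = -1 := by
  obtain ⟨r, hr, hrA⟩ := Matrix.SpecialLinearGroup.mem_center_iff.mp hA
  rcases sq_eq_one_iff.mp (by simpa using hr : r ^ 2 = 1) with rfl | rfl
  · exact .inl (Subtype.ext (hrA.symm.trans (by simp)))
  · exact .inr (Subtype.ext (hrA.symm.trans (by simp)))

lemma proj_neg (A : SL2Z) : proj (-A) = proj A := by
  have : (-1 : SL2Z) ∈ Subgroup.center SL2Z := Subgroup.mem_center_iff.mpr fun g => by simp
  rw [← neg_one_mul, map_mul, proj.mem_ker.mp (by rwa [proj, QuotientGroup.ker_mk']), one_mul]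

namespace PSL2Z

def s : PSL2Z := proj S

def u : PSL2Z := proj (S * T)

lemma s_sq : s ^ 2 = 1 := by
  rw [s, ← map_pow, sq, S_mul_S, proj_neg, map_one]

lemma u_pow_three : u ^ 3 = 1 := by
  rw [u, ← map_pow, S_mul_T_pow_three, proj_neg, map_one]

noncomputable def moebius : PSL2Z →* Equiv.Perm ℍ :=
  QuotientGroup.lift _ (MulAction.toPermHom SL2Z ℍ) fun A hA => by
    ext z
    rcases eq_one_or_eq_neg_one_of_mem_center hA with rfl | rfl <;> simp

lemma moebius_proj (A : SL2Z) (z : ℍ) : moebius (proj A) z = A • z :=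
  rfl

instance (i : Fin 2) : NeZero (![2, 3] i) := ⟨by fin_cases i <;> decide⟩

noncomputable def ofCoprod : CyclicCoprod ![2, 3] →* PSL2Z :=
  CyclicCoprod.lift _ ![s, u] (Fin.forall_fin_two.mpr ⟨s_sq, u_pow_three⟩)

lemma ofCoprod_of_zero_ofAdd_one : ofCoprod (Monoid.CoprodI.of (i := 0) (.ofAdd 1)) = s :=
  (CyclicCoprod.lift_of _ _ _ _).trans (pow_one s)

lemma ofCoprod_of_one_ofAdd_one : ofCoprod (Monoid.CoprodI.of (i := 1) (.ofAdd 1)) = u :=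
  (CyclicCoprod.lift_of _ _ _ _).trans (pow_one u)

lemma ofCoprod_injective : Function.Injective ofCoprod := by
  refine .of_comp (f := moebius) ?_
  rw [← MonoidHom.coe_comp, ofCoprod, CyclicCoprod.comp_lift]
  refine Monoid.CoprodI.lift_injective_of_ping_pong _ (.inr ⟨1, by simp⟩)
    ![{z : ℍ | 0 < z.re}, {z : ℍ | z.re < 0}] ?_ ?_ ?_
  · refine Fin.forall_fin_two.mpr
      ⟨⟨(1 : ℝ) +ᵥ UpperHalfPlane.I, ?_⟩, ⟨(-1 : ℝ) +ᵥ UpperHalfPlane.I, ?_⟩⟩ <;> simp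
  · intro i j hij
    fin_cases i <;> fin_cases j
    · exact absurd rfl hij
    · exact Set.disjoint_left.mpr fun z (hz : 0 < z.re) (hz' : z.re < 0) => hz.not_gt hz'
    · exact Set.disjoint_left.mpr fun z (hz : z.re < 0) (hz' : 0 < z.re) => hz.not_gt hz'
    · exact absurd rfl hij
  · intro i j hij h hh
    fin_cases i <;> fin_cases j
    · exact absurd rfl hij
    · have hv : h.toAdd.val = 1 := (by decide : ∀ a : ZMod 2, a ≠ 0 → a.val = 1) _ hh
      rintro _ ⟨z, hz, rfl⟩
      rw [zmodPowHom_apply, hv, pow_one]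
      exact re_S_smul_pos hz
    · have hv : h.toAdd.val = 1 ∨ h.toAdd.val = 2 :=
        (by decide : ∀ a : ZMod 3, a ≠ 0 → a.val = 1 ∨ a.val = 2) _ hh
      rintro _ ⟨z, hz, rfl⟩
      rcases hv with hv | hv <;> rw [zmodPowHom_apply, hv]
      · exact re_S_mul_T_smul_neg hz
      · change ((moebius u ^ 2) z).re < 0
        rw [← map_pow, u, ← map_pow, moebius_proj]
        exact re_S_mul_T_sq_smul_neg hz
    · exact absurd rfl hij

lemma ofCoprod_surjective : Function.Surjective ofCoprod := by
  have hs : s ∈ ofCoprod.range := ⟨_, ofCoprod_of_zero_ofAdd_one⟩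
  have hu : u ∈ ofCoprod.range := ⟨_, ofCoprod_of_one_ofAdd_one⟩
  rw [← MonoidHom.range_eq_top, eq_top_iff, ← Subgroup.map_top_of_surjective proj
    (QuotientGroup.mk'_surjective _), ← SpecialLinearGroup.SL2Z_generators,
    Subgroup.map_le_iff_le_comap, Subgroup.closure_le]
  rintro _ (rfl | rfl)
  · exact hs
  · have hT : (T : SL2Z) = S⁻¹ * (S * T) := by group
    rw [SetLike.mem_coe, Subgroup.mem_comap, hT, map_mul, map_inv]
    exact mul_mem (inv_mem hs) hu

noncomputable def coprodEquiv : CyclicCoprod ![2, 3] ≃* PSL2Z :=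
  MulEquiv.ofBijective ofCoprod ⟨ofCoprod_injective, ofCoprod_surjective⟩

lemma s_ne_one : s ≠ 1 := by
  rw [← ofCoprod_of_zero_ofAdd_one, map_ne_one_iff _ ofCoprod_injective,
    map_ne_one_iff _ (Monoid.CoprodI.of_injective _)]
  decide

lemma orderOf_s : orderOf s = 2 :=
  orderOf_eq_prime s_sq s_ne_one

lemma s_smul_ne_self {Γ : Subgroup PSL2Z} (h2 : ∀ γ ∈ Γ, orderOf γ ≠ 2) (y : PSL2Z ⧸ Γ) :
    s • y ≠ y := by
  induction y using QuotientGroup.induction_on with | H g => ?_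
  intro hg
  rw [MulAction.Quotient.smul_mk, QuotientGroup.eq, smul_eq_mul, mul_inv_rev] at hg
  refine h2 _ hg ?_
  have hconj : SemiconjBy g (g⁻¹ * s⁻¹ * g) s⁻¹ := by simp [SemiconjBy, mul_assoc]
  rw [hconj.orderOf_eq, orderOf_inv, orderOf_s]

end PSL2Z

open PSL2Z

section TwistedS

variable {Γ : Subgroup PSL2Z} (c : PSL2Z ⧸ Γ → ZMod 2)

def twistedS (x : SL2Z) : SL2Z :=
  (if c (proj x : PSL2Z ⧸ Γ) = 0 then 1 else -1) * (S * x)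

lemma proj_twistedS (x : SL2Z) : proj (twistedS c x) = s * proj x := by
  unfold twistedS
  split_ifs <;> simp [proj_neg, s]

variable {c}

lemma twistedS_involutive (hc : ∀ y, c (s • y) = c y + 1) :
    Function.Involutive (twistedS c) := by
  intro x
  have hcx : c (proj (twistedS c x) : PSL2Z ⧸ Γ) = c (proj x : PSL2Z ⧸ Γ) + 1 := by
    rw [proj_twistedS, ← smul_eq_mul, ← MulAction.Quotient.smul_mk, hc]
  rw [twistedS, hcx, twistedS]
  -- the two signs are opposite, which cancels `S * S = -1`
  rcases (by decide : ∀ a : ZMod 2, a = 0 ∨ a = 1) (c (proj x : PSL2Z ⧸ Γ)) with h | h <;>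
    simp [h, ← mul_assoc, S_mul_S, show (1 : ZMod 2) + 1 = 0 from rfl]

lemma twistedS_mem_liftingPerms (hc : ∀ y, c (s • y) = c y + 1) :
    ((twistedS_involutive hc).toPerm, s) ∈ liftingPerms proj Γ := by
  refine ⟨proj_twistedS c, fun x b hb => ?_⟩
  simp only [Function.Involutive.coe_toPerm, twistedS, map_mul,
    QuotientGroup.mk_mul_of_mem _ (Subgroup.mem_comap.mp hb), mul_assoc]

end TwistedS

lemma mulLeft_mem_liftingPerms (Γ : Subgroup PSL2Z) :
    (MulAction.toPermHom SL2Z SL2Z (-(S * T)), u) ∈ liftingPerms proj Γ :=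
  ⟨fun x => by simp [proj_neg, u], fun x b _ => by simp [mul_assoc]⟩

theorem exists_section_liftingPerms {Γ : Subgroup PSL2Z} {c : PSL2Z ⧸ Γ → ZMod 2}
    (hc : ∀ y, c (s • y) = c y + 1) :
    ∃ κ : PSL2Z →* liftingPerms proj Γ, ∀ g, (κ g : Equiv.Perm SL2Z × PSL2Z).2 = g := by
  let gens : Fin 2 → liftingPerms proj Γ :=
    ![⟨_, twistedS_mem_liftingPerms hc⟩, ⟨_, mulLeft_mem_liftingPerms Γ⟩]
  have hgens : ∀ i, gens i ^ ![2, 3] i = 1 := by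
    refine Fin.forall_fin_two.mpr
      ⟨Subtype.ext (Prod.ext ?_ s_sq), Subtype.ext (Prod.ext ?_ u_pow_three)⟩
    · change (twistedS_involutive hc).toPerm ^ 2 = 1
      exact Equiv.ext (twistedS_involutive hc)
    · change MulAction.toPermHom SL2Z SL2Z (-(S * T)) ^ 3 = 1
      rw [← map_pow, neg_S_mul_T_pow_three, map_one]
  let κ := CyclicCoprod.lift _ gens hgens
  have hκ : ((MonoidHom.snd _ _).comp (liftingPerms proj Γ).subtype).comp κ = ofCoprod := by
    rw [CyclicCoprod.comp_lift, ofCoprod]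
    congr 1
    funext i
    fin_cases i <;> rfl
  refine ⟨κ.comp coprodEquiv.symm.toMonoidHom, fun g => ?_⟩
  exact (DFunLike.congr_fun hκ _).trans (coprodEquiv.apply_symm_apply g)

theorem stmt_0_general (Γ : Subgroup PSL2Z)
    (h2 : ∀ γ ∈ Γ, orderOf γ ≠ 2) :
    ∃ s : Γ →* (Γ.comap proj), ∀ γ : Γ, proj ((s γ : Γ.comap proj) : SL2Z) = (γ : PSL2Z) := by
  have hs : Function.Involutive (s • · : PSL2Z ⧸ Γ → PSL2Z ⧸ Γ) := fun y => by
    simp only [smul_smul, ← sq, s_sq, one_smul]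
  obtain ⟨c, hc⟩ := hs.exists_parity (s_smul_ne_self h2)
  obtain ⟨κ, hκ⟩ := exists_section_liftingPerms hc
  exact exists_splitting_of_liftingPerms proj Γ κ hκ

/-- If `Γ ≤ PSL(2,ℤ)` has finite index and contains no element of order 2, then the
surjection `Γ' = π⁻¹(Γ) → Γ` splits. -/
theorem stmt_0 (Γ : Subgroup PSL2Z) (hfi : Γ.FiniteIndex)
    (h2 : ∀ γ ∈ Γ, orderOf γ ≠ 2) :
    ∃ s : Γ →* (Γ.comap proj), ∀ γ : Γ, proj ((s γ : Γ.comap proj) : SL2Z) = (γ : PSL2Z) :=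
  stmt_0_general Γ h2
end

section
/- Let T₁, …, Tₙ be elements of SL(2,ℤ), each conjugate to T. If the product T₁ T₂ ⋯ Tₙ lies in the center {±I} of SL(2,ℤ), then n is divisible by 6. -/
/-- An element of `SL(2,ℤ)` is a (right) Dehn twist if it is conjugate to `T = [[1,1],[0,1]]`. -/
def IsDehnTwist (x : SL2Z) : Prop := IsConj ModularGroup.T x

open Matrix SpecialLinearGroup
open scoped MatrixGroups

theorem MonoidHom.map_list_prod_of_forall_isConj {G M : Type*} [Group G] [CommMonoid M]
    (φ : G →* M) {t : G} {L : List G} (hL : ∀ x ∈ L, IsConj t x) :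
    φ L.prod = φ t ^ L.length := by
  have hφ : ∀ x ∈ L, φ x = φ t := fun x hx => (isConj_iff_eq.mp (φ.map_isConj (hL x hx))).symm
  rw [map_list_prod, List.map_congr_left hφ, List.map_const', List.prod_replicate]

theorem orderOf_dvd_length_of_forall_isConj {G M : Type*} [Group G] [CommMonoid M]
    (φ : G →* M) {t : G} {L : List G} (hL : ∀ x ∈ L, IsConj t x) (hprod : φ L.prod = 1) :
    orderOf (φ t) ∣ L.length :=
  orderOf_dvd_of_pow_eq_one (φ.map_list_prod_of_forall_isConj hL ▸ hprod)

/- `SL(2,𝔽₂) ≅ S₃` and `SL(2,𝔽₃)` have abelianizations `ℤ/2` and `ℤ/3`; these polynomials in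
the entries realise the characters, and `decide` checks multiplicativity on all pairs. -/
def sl2ZMod2Char : SL(2, ZMod 2) →* Multiplicative (ZMod 2) where
  toFun A := Multiplicative.ofAdd (A 0 0 * A 1 0 + A 0 1 * A 1 0 + A 0 1 * A 1 1)
  map_one' := by decide
  map_mul' := by decide

def sl2ZMod3Char : SL(2, ZMod 3) →* Multiplicative (ZMod 3) where
  toFun A := Multiplicative.ofAdd (A 0 0 * A 1 0 + A 0 1 * A 1 1 + A 1 0 * A 1 1
    + 2 * A 0 1 * A 1 0 * A 1 0 * A 1 1)
  map_one' := by decide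
  map_mul' := by decide

theorem dvd_length_of_prod_eq_one_or_neg_one {n : ℕ} [NeZero n]
    (ψ : SL(2, ZMod n) →* Multiplicative (ZMod n))
    (hT : ψ (map (Int.castRingHom _) ModularGroup.T) = Multiplicative.ofAdd 1)
    (hneg : ψ (-1) = 1)
    {L : List SL2Z} (hL : ∀ x ∈ L, IsDehnTwist x) (hprod : L.prod = 1 ∨ L.prod = -1) :
    n ∣ L.length := by
  set φ := ψ.comp (map (Int.castRingHom (ZMod n)))
  have hprod' : φ L.prod = 1 := by
    rcases hprod with h | h <;> simp [φ, h, hneg]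
  have := orderOf_dvd_length_of_forall_isConj φ hL hprod'
  rwa [MonoidHom.comp_apply, hT, orderOf_ofAdd_eq_addOrderOf, ZMod.addOrderOf_one] at this

/-- If a product of `n` elements, each conjugate to `T`, lies in the center `{±I}` of
`SL(2,ℤ)`, then `6 ∣ n`. -/
theorem stmt_6 (L : List SL2Z) (hL : ∀ x ∈ L, IsDehnTwist x)
    (hprod : L.prod = 1 ∨ L.prod = -1) : 6 ∣ L.length := by
  have h2 := dvd_length_of_prod_eq_one_or_neg_one sl2ZMod2Char (by decide) (by decide) hL hprod
  have h3 := dvd_length_of_prod_eq_one_or_neg_one sl2ZMod3Char (by decide) (by decide) hL hprod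
  omega
end

section
/- Let T₁, …, Tₙ be elements of SL(2,ℤ), each conjugate to T. If the product T₁ T₂ ⋯ Tₙ equals the identity matrix I, then n is divisible by 12. -/
/-- Lookup table for the abelianization map `SL(2, ℤ/3) → ℤ/3`. -/
def tab3 : List (ZMod 3) :=
[0, 0, 0, 0, 0, 0, 0, 0, 0, 0, 0, 0, 0, 0, 0, 0, 1, 2, 0, 0, 0, 0, 2, 1, 0, 0, 0, 0, 0, 0, 0, 1, 0, 0, 2, 0, 0, 2, 0, 0, 0, 0, 1, 0, 0, 0, 1, 0, 2, 0, 0, 0, 0, 0, 0, 0, 0, 0, 0, 2, 0, 0, 1, 0, 0, 1, 0, 0, 0, 2, 0, 0, 0, 0, 2, 1, 0, 0, 0, 0, 0]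

/-- Lookup table for the abelianization map `SL(2, ℤ/4) → ℤ/4`. -/
def tab4 : List (ZMod 4) :=
[0, 0, 0, 0, 0, 0, 0, 0, 0, 0, 0, 0, 0, 0, 0, 0, 0, 0, 0, 0, 0, 0, 0, 0, 0, 0, 0, 0, 1, 2, 3, 0, 0, 0, 0, 0, 0, 0, 0, 0, 0, 0, 0, 0, 0, 0, 0, 0, 0, 0, 0, 0, 3, 2, 1, 0, 0, 0, 0, 0, 0, 0, 0, 0, 0, 0, 0, 0, 0, 1, 0, 0, 0, 2, 0, 0, 0, 3, 0, 0, 0, 3, 0, 0, 0, 0, 0, 0, 0, 0, 0, 1, 2, 0, 0, 0, 0, 2, 0, 0, 0, 0, 0, 3, 0, 0, 0, 0, 0, 0, 0, 1, 0, 1, 0, 0, 2, 0, 0, 0, 0, 0, 0, 3, 0, 0, 0, 0, 0, 0, 0, 0, 0, 0, 0, 0, 0, 0, 0, 0, 0, 0, 0, 0, 0, 0, 0, 0, 0, 0, 0, 2, 0, 0, 0, 0, 3, 0, 1, 0, 0, 0, 0, 0, 0, 0, 0, 0, 0, 0, 0, 0, 0, 0, 0, 0, 0, 0, 0, 0, 1,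 0, 3, 0, 0, 0, 0, 0, 0, 0, 0, 2, 0, 0, 0, 2, 0, 0, 0, 1, 0, 0, 0, 0, 0, 0, 0, 3, 0, 0, 0, 3, 0, 0, 2, 0, 0, 1, 0, 0, 0, 0, 0, 0, 0, 0, 0, 0, 0, 3, 0, 0, 0, 0, 0, 2, 0, 1, 0, 0, 0, 0, 0, 1, 0, 0, 0, 0, 0, 3, 0, 0, 0, 0, 2, 0]

def f3 (a b c d : ZMod 3) : ZMod 3 := tab3.getD (a.val + 3*b.val + 9*c.val + 27*d.val) 0
def f4 (a b c d : ZMod 4) : ZMod 4 := tab4.getD (a.val + 4*b.val + 16*c.val + 64*d.val) 0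

set_option maxRecDepth 100000 in
set_option maxHeartbeats 4000000 in
lemma f3_hom : ∀ a b c d e f g h : ZMod 3, a*d - b*c = 1 → e*h - f*g = 1 →
    f3 (a*e+b*g) (a*f+b*h) (c*e+d*g) (c*f+d*h) = f3 a b c d + f3 e f g h := by decide

set_option maxRecDepth 100000 in
set_option maxHeartbeats 4000000 in
lemma f4_hom : ∀ a b c d e f g h : ZMod 4, a*d - b*c = 1 → e*h - f*g = 1 →
    f4 (a*e+b*g) (a*f+b*h) (c*e+d*g) (c*f+d*h) = f4 a b c d + f4 e f g h := by decide

section phis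

variable (n : ℕ) [NeZero n]

def ent (x : SL2Z) (i j : Fin 2) : ZMod n := ((x : Matrix (Fin 2) (Fin 2) ℤ) i j : ZMod n)

lemma ent_det (x : SL2Z) : ent n x 0 0 * ent n x 1 1 - ent n x 0 1 * ent n x 1 0 = 1 := by
  have h : (x : Matrix (Fin 2) (Fin 2) ℤ).det = 1 := x.2
  rw [Matrix.det_fin_two] at h
  have := congrArg (fun z : ℤ => (z : ZMod n)) h
  simpa [ent] using this

lemma ent_mul (x y : SL2Z) (i j : Fin 2) :
    ent n (x*y) i j = ent n x i 0 * ent n y 0 j + ent n x i 1 * ent n y 1 j := by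
  simp [ent, Matrix.SpecialLinearGroup.coe_mul, Matrix.mul_apply, Fin.sum_univ_two]

end phis

def φ3 : SL2Z →* Multiplicative (ZMod 3) where
  toFun x := Multiplicative.ofAdd (f3 (ent 3 x 0 0) (ent 3 x 0 1) (ent 3 x 1 0) (ent 3 x 1 1))
  map_one' := by
    have h00 : ent 3 (1 : SL2Z) 0 0 = 1 := by simp [ent]
    have h01 : ent 3 (1 : SL2Z) 0 1 = 0 := by simp [ent]
    have h10 : ent 3 (1 : SL2Z) 1 0 = 0 := by simp [ent]
    have h11 : ent 3 (1 : SL2Z) 1 1 = 1 := by simp [ent]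
    simp only [h00, h01, h10, h11]
    decide
  map_mul' x y := by
    have := f3_hom (ent 3 x 0 0) (ent 3 x 0 1) (ent 3 x 1 0) (ent 3 x 1 1)
      (ent 3 y 0 0) (ent 3 y 0 1) (ent 3 y 1 0) (ent 3 y 1 1) (ent_det 3 x) (ent_det 3 y)
    simp only [ent_mul]
    exact congrArg Multiplicative.ofAdd this

def φ4 : SL2Z →* Multiplicative (ZMod 4) where
  toFun x := Multiplicative.ofAdd (f4 (ent 4 x 0 0) (ent 4 x 0 1) (ent 4 x 1 0) (ent 4 x 1 1))
  map_one' := by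
    have h00 : ent 4 (1 : SL2Z) 0 0 = 1 := by simp [ent]
    have h01 : ent 4 (1 : SL2Z) 0 1 = 0 := by simp [ent]
    have h10 : ent 4 (1 : SL2Z) 1 0 = 0 := by simp [ent]
    have h11 : ent 4 (1 : SL2Z) 1 1 = 1 := by simp [ent]
    simp only [h00, h01, h10, h11]
    decide
  map_mul' x y := by
    have := f4_hom (ent 4 x 0 0) (ent 4 x 0 1) (ent 4 x 1 0) (ent 4 x 1 1)
      (ent 4 y 0 0) (ent 4 y 0 1) (ent 4 y 1 0) (ent 4 y 1 1) (ent_det 4 x) (ent_det 4 y)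
    simp only [ent_mul]
    exact congrArg Multiplicative.ofAdd this

lemma φ3_T : φ3 ModularGroup.T = Multiplicative.ofAdd (1 : ZMod 3) := by
  have h00 : ent 3 ModularGroup.T 0 0 = 1 := by simp [ent, ModularGroup.T]
  have h01 : ent 3 ModularGroup.T 0 1 = 1 := by simp [ent, ModularGroup.T]
  have h10 : ent 3 ModularGroup.T 1 0 = 0 := by simp [ent, ModularGroup.T]
  have h11 : ent 3 ModularGroup.T 1 1 = 1 := by simp [ent, ModularGroup.T]
  show Multiplicative.ofAdd _ = _
  rw [h00, h01, h10, h11]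
  decide

lemma φ4_T : φ4 ModularGroup.T = Multiplicative.ofAdd (1 : ZMod 4) := by
  have h00 : ent 4 ModularGroup.T 0 0 = 1 := by simp [ent, ModularGroup.T]
  have h01 : ent 4 ModularGroup.T 0 1 = 1 := by simp [ent, ModularGroup.T]
  have h10 : ent 4 ModularGroup.T 1 0 = 0 := by simp [ent, ModularGroup.T]
  have h11 : ent 4 ModularGroup.T 1 1 = 1 := by simp [ent, ModularGroup.T]
  show Multiplicative.ofAdd _ = _
  rw [h00, h01, h10, h11]
  decide

/-- If a product of `n` elements, each conjugate to `T`, equals the identity `I`,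
then `12 ∣ n`. -/
theorem stmt_7 (L : List SL2Z) (hL : ∀ x ∈ L, IsDehnTwist x)
    (hprod : L.prod = 1) : 12 ∣ L.length := by
  set n := L.length
  have key : ∀ (G : Type) [inst : CommGroup G] (φ : SL2Z →* G),
      φ (L.prod) = (φ ModularGroup.T) ^ n := by
    intro G inst φ
    rw [← List.prod_hom L φ]
    have hmem : ∀ b ∈ L.map φ, b = φ ModularGroup.T := by
      intro b hb
      obtain ⟨x, hx, rfl⟩ := List.mem_map.mp hb
      obtain ⟨g, hg⟩ := hL x hx
      have h2 := congrArg φ hg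
      simp only [map_mul] at h2
      exact (mul_left_cancel (h2.trans (mul_comm _ _))).symm
    rw [List.eq_replicate_of_mem hmem, List.prod_replicate, List.length_map]
  have h3 : ((n : ℤ) : ZMod 3) = 0 := by
    have := key (Multiplicative (ZMod 3)) φ3
    rw [hprod, map_one, φ3_T] at this
    have h := congrArg Multiplicative.toAdd this.symm
    simpa [toAdd_pow, nsmul_eq_mul] using h
  have h4 : ((n : ℤ) : ZMod 4) = 0 := by
    have := key (Multiplicative (ZMod 4)) φ4
    rw [hprod, map_one, φ4_T] at this
    have h := congrArg Multiplicative.toAdd this.symm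
    simpa [toAdd_pow, nsmul_eq_mul] using h
  have d3 : 3 ∣ n := by
    have := (ZMod.intCast_zmod_eq_zero_iff_dvd (n : ℤ) 3).mp h3
    exact_mod_cast this
  have d4 : 4 ∣ n := by
    have := (ZMod.intCast_zmod_eq_zero_iff_dvd (n : ℤ) 4).mp h4
    exact_mod_cast this
  exact Nat.Coprime.mul_dvd_of_dvd_of_dvd (by norm_num) d3 d4
end

section
/- Let g ∈ SL(2,ℤ). If g can be written both as a product of m elements each conjugate to T and as a product of n elements each conjugate to T, then m ≡ n (mod 12). -/
open Matrix

section ConjugateProducts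

variable {G : Type*} [Group G]

theorem map_eq_of_isConj {M : Type*} [CommMonoid M] (φ : G →* M) {a b : G} (h : IsConj a b) :
    φ a = φ b :=
  isConj_iff_eq.mp (φ.map_isConj h)

theorem map_prod_of_forall_isConj {M : Type*} [CommMonoid M] (φ : G →* M) {t : G} {L : List G}
    (hL : ∀ x ∈ L, IsConj t x) : φ L.prod = φ t ^ L.length := by
  rw [map_list_prod, List.map_congr_left fun x hx => (map_eq_of_isConj φ (hL x hx)).symm,
    List.map_const', List.prod_replicate]

theorem length_modEq_of_prod_eq_of_forall_isConj {k : ℕ} (φ : G →* Multiplicative (ZMod k))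
    {t : G} (ht : φ t = Multiplicative.ofAdd 1) {L₁ L₂ : List G}
    (h₁ : ∀ x ∈ L₁, IsConj t x) (h₂ : ∀ x ∈ L₂, IsConj t x) (h : L₁.prod = L₂.prod) :
    L₁.length ≡ L₂.length [MOD k] := by
  have hφ := congrArg φ h
  rw [map_prod_of_forall_isConj φ h₁, map_prod_of_forall_isConj φ h₂, ht, ← ofAdd_nsmul,
    ← ofAdd_nsmul, nsmul_one, nsmul_one] at hφ
  exact (ZMod.natCast_eq_natCast_iff _ _ _).mp (Multiplicative.ofAdd.injective hφ)

end ConjugateProducts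

def charSL2ZMod3 : SpecialLinearGroup (Fin 2) (ZMod 3) →* Multiplicative (ZMod 3) where
  toFun A := Multiplicative.ofAdd
    (A 0 0 * A 1 0 + A 0 1 * A 1 1 + A 1 0 * A 1 1 + 2 * A 0 1 * A 1 0 ^ 2 * A 1 1)
  map_one' := by decide
  map_mul' := by decide

def charSL2ZMod4 : SpecialLinearGroup (Fin 2) (ZMod 4) →* Multiplicative (ZMod 4) where
  toFun A := Multiplicative.ofAdd
    (1 + A 1 1 + A 0 0 * (A 0 1 + 2) + A 1 0 * (A 0 1 + 1) * (A 0 1 + A 1 1 + 2))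
  map_one' := by decide
  map_mul' := by decide

namespace SL2Z

def charMod3 : SL2Z →* Multiplicative (ZMod 3) :=
  charSL2ZMod3.comp (SpecialLinearGroup.map (Int.castRingHom (ZMod 3)))

def charMod4 : SL2Z →* Multiplicative (ZMod 4) :=
  charSL2ZMod4.comp (SpecialLinearGroup.map (Int.castRingHom (ZMod 4)))

theorem charMod3_T : charMod3 ModularGroup.T = Multiplicative.ofAdd 1 := by decide

theorem charMod4_T : charMod4 ModularGroup.T = Multiplicative.ofAdd 1 := by decide

end SL2Z

/-- If `g ∈ SL(2,ℤ)` is a product of `m` conjugates of `T` and also a product of `n`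
conjugates of `T`, then `m ≡ n (mod 12)`. -/
theorem stmt_9 (g : SL2Z) (L₁ L₂ : List SL2Z)
    (h₁ : ∀ x ∈ L₁, IsDehnTwist x) (h₂ : ∀ x ∈ L₂, IsDehnTwist x)
    (hp₁ : L₁.prod = g) (hp₂ : L₂.prod = g) :
    L₁.length ≡ L₂.length [MOD 12] := by
  have h : L₁.prod = L₂.prod := hp₁.trans hp₂.symm
  exact (Nat.modEq_and_modEq_iff_modEq_mul (by norm_num)).mp
    ⟨length_modEq_of_prod_eq_of_forall_isConj SL2Z.charMod3 SL2Z.charMod3_T h₁ h₂ h,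
      length_modEq_of_prod_eq_of_forall_isConj SL2Z.charMod4 SL2Z.charMod4_T h₁ h₂ h⟩
end
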